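/- arXiv:2603.02238 — 4 statements merged into one kernel-verified Lean document; each statement's English description precedes it below -/
import Mathlib

section
/- If a Diophantine equation system (consisting of equations of the forms x = c, x + y = z, x·y = z over variables ranging over ℕ, with distinct variables within each equation) is encoded, equation-by-equation, by languages L₁,...,Lₙ, and φ is the concatenation formula for L₁$⋯$Lₙ conjoined with, for each variable x, the constraints that the number of occurrences of x between the i-th and (i+1)-th $ equals the number between the (i+1)-th and (i+2)-th $, then the language of φ is nonempty if and only if the system has a solution in ℕ. -/
/-- Diophantine equations of the three basic forms `x = c`, `x + y = z`, `x·y = z`. -/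
inductive DioEq (V : Type) : Type
  | const : V → ℕ → DioEq V
  | add : V → V → V → DioEq V
  | mul : V → V → V → DioEq V

/-- An assignment `f : V → ℕ` satisfies an equation. -/
def DioEq.Sat {V : Type} (f : V → ℕ) : DioEq V → Prop
  | .const x c => f x = c
  | .add x y z => f x + f y = f z
  | .mul x y z => f x * f y = f z

/-- The variables within an equation are pairwise distinct. -/
def DioEq.Distinct {V : Type} : DioEq V → Prop
  | .const _ _ => True
  | .add x y z => x ≠ y ∧ x ≠ z ∧ y ≠ z
  | .mul x y z => x ≠ y ∧ x ≠ z ∧ y ≠ z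

/-- `L` encodes the equation `D` (variables embedded in the alphabet via `ι`):
every member's letter counts satisfy `D`, and every solution is realized by the
letter counts of some member. -/
def Encodes {V α : Type} [DecidableEq α] (ι : V → α) (L : Set (List α)) (D : DioEq V) : Prop :=
  (∀ w ∈ L, D.Sat (fun x => w.count (ι x))) ∧
    (∀ f : V → ℕ, D.Sat f → ∃ w ∈ L, ∀ x, w.count (ι x) = f x)

/-- If each equation `D i` of the system is encoded by the language `L i`, then the
language of the concatenation `L₁$⋯$Lₙ` (separator `$` modelled as `none`) constrained so
that, for each variable `x`, consecutive `$`-delimited blocks have equal counts of `x`,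
is nonempty iff the system has a solution in ℕ. -/
theorem concat_lang_nonempty_iff_solution (V α : Type) [DecidableEq α]
    (ι : V → α) (hι : Function.Injective ι) (n : ℕ) (hn : 0 < n)
    (D : Fin n → DioEq V) (L : Fin n → Set (List α))
    (hdist : ∀ i, (D i).Distinct) (henc : ∀ i, Encodes ι (L i) (D i)) :
    Set.Nonempty {w : List (Option α) | ∃ v : Fin n → List α,
        (∀ i, v i ∈ L i) ∧
        w = List.intercalate [(none : Option α)] (List.ofFn fun i : Fin n => (v i).map some) ∧
        (∀ x : V, ∀ i : ℕ, ∀ h : i + 1 < n,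
          (v ⟨i, Nat.lt_of_succ_lt h⟩).count (ι x) = (v ⟨i + 1, h⟩).count (ι x))} ↔
      ∃ f : V → ℕ, ∀ i, (D i).Sat f := by
  constructor
  · rintro ⟨w, v, hv, -, hcount⟩
    refine ⟨fun x => (v ⟨0, hn⟩).count (ι x), fun i => ?_⟩
    have key : ∀ x, ∀ k, ∀ hk : k < n,
        (v ⟨k, hk⟩).count (ι x) = (v ⟨0, hn⟩).count (ι x) := by
      intro x k
      induction k with
      | zero => intro hk; rfl
      | succ m ih => intro hk; rw [← hcount x m hk]; exact ih _
    have := (henc i).1 (v i) (hv i)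
    have hfun : (fun x => (v ⟨0, hn⟩).count (ι x)) = fun x => (v i).count (ι x) := by
      funext x
      have := key x i.1 i.2
      simpa using this.symm
    rw [hfun]
    exact this
  · rintro ⟨f, hf⟩
    choose w hw hwc using fun i => (henc i).2 f (hf i)
    refine ⟨_, w, hw, rfl, fun x i h => ?_⟩
    rw [hwc, hwc]
end

section
/- Let c ≥ 1 be a natural number. For a string w, position i, and formula ψ, #[ψ] at (w,i) is ≥ c if and only if either there exist positions j₁ < j₂ < ⋯ < j_c < i all satisfying ψ (i.e., the c-fold nesting ◆(ψ ∧ ◆(ψ ∧ ⋯ ◆ψ)) holds at i), or ψ holds at i and there exist positions j₁ < ⋯ < j_{c−1} < i all satisfying ψ (i.e., ψ ∧ the (c−1)-fold nesting holds at i). -/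
lemma exists_strictMono_iff_card (S : Finset ℕ) (k : ℕ) :
    (∃ f : Fin k → ℕ, StrictMono f ∧ ∀ m, f m ∈ S) ↔ k ≤ S.card := by
  constructor
  · rintro ⟨f, hf, hmem⟩
    have : (Finset.univ.image f).card = k := by
      rw [Finset.card_image_of_injective _ hf.injective, Finset.card_univ, Fintype.card_fin]
    rw [← this]
    apply Finset.card_le_card
    intro x hx
    simp only [Finset.mem_image, Finset.mem_univ, true_and] at hx
    obtain ⟨m, rfl⟩ := hx
    exact hmem m
  · intro hk
    obtain ⟨T, hTS, hT⟩ := Finset.exists_subset_card_eq hk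
    refine ⟨fun m => (T.orderIsoOfFin hT m : ℕ), ?_, fun m => hTS (T.orderIsoOfFin hT m).2⟩
    intro a b hab
    exact (T.orderIsoOfFin hT).strictMono hab

/-- Translation of counting thresholds into the strict-past diamond: with `P j` meaning
"ψ holds at position j of w" (valid positions `1 ≤ j ≤ i`), the count `#[ψ]` at `i`
(which includes the current position) is `≥ c` iff either there are `c` strictly
increasing past positions satisfying ψ (the `c`-fold ◆-nesting), or ψ holds at `i`
and there are `c − 1` such past positions. -/
theorem count_ge_iff_nesting (P : ℕ → Prop) [DecidablePred P] (i c : ℕ)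
    (hc : 1 ≤ c) (hi : 1 ≤ i) :
    (c ≤ ((Finset.Icc 1 i).filter (fun j => P j)).card) ↔
      ((∃ f : Fin c → ℕ, StrictMono f ∧ ∀ m, 1 ≤ f m ∧ f m < i ∧ P (f m)) ∨
        (P i ∧ ∃ f : Fin (c - 1) → ℕ, StrictMono f ∧ ∀ m, 1 ≤ f m ∧ f m < i ∧ P (f m))) := by
  set S₁ := (Finset.Ico 1 i).filter (fun j => P j) with hS₁
  have hmem : ∀ (k : ℕ) (f : Fin k → ℕ),
      (∀ m, 1 ≤ f m ∧ f m < i ∧ P (f m)) ↔ (∀ m, f m ∈ S₁) := by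
    intro k f
    simp [hS₁, Finset.mem_filter, Finset.mem_Ico, and_assoc]
  have hL : (∃ f : Fin c → ℕ, StrictMono f ∧ ∀ m, 1 ≤ f m ∧ f m < i ∧ P (f m)) ↔
      c ≤ S₁.card := by
    rw [← exists_strictMono_iff_card]
    exact exists_congr fun f => and_congr_right fun _ => hmem c f
  have hR : (∃ f : Fin (c-1) → ℕ, StrictMono f ∧ ∀ m, 1 ≤ f m ∧ f m < i ∧ P (f m)) ↔
      c - 1 ≤ S₁.card := by
    rw [← exists_strictMono_iff_card]
    exact exists_congr fun f => and_congr_right fun _ => hmem (c-1) f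
  have hIcc : Finset.Icc 1 i = insert i (Finset.Ico 1 i) := by
    rw [Finset.Ico_insert_right hi]
  by_cases hPi : P i
  · have hcard : ((Finset.Icc 1 i).filter (fun j => P j)).card = S₁.card + 1 := by
      rw [hIcc, Finset.filter_insert, if_pos hPi, Finset.card_insert_of_notMem]
      simp [hS₁, Finset.mem_filter]
    rw [hcard, hL, hR]
    constructor
    · intro h
      exact Or.inr ⟨hPi, by omega⟩
    · rintro (h | ⟨_, h⟩) <;> omega
  · have hcard : ((Finset.Icc 1 i).filter (fun j => P j)).card = S₁.card := by
      rw [hIcc, Finset.filter_insert, if_neg hPi]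
    rw [hcard, hL, hR]
    constructor
    · exact Or.inl
    · rintro (h | ⟨h, _⟩)
      · exact h
      · exact absurd h hPi
end

section
/- Every satisfiable TL[◆] formula (unary past temporal logic with only ◆, ⊟, Boolean connectives, and symbol predicates over a finite alphabet Σ) has a satisfying string of length at most polynomial in the size of the formula. -/
/-- Formulas of the unary past temporal logic TL[◆]. -/
inductive TForm (α : Type) : Type
  | sym : α → TForm α
  | not : TForm α → TForm α
  | and : TForm α → TForm α → TForm α
  | prev : TForm α → TForm α
  | hist : TForm α → TForm α

def TForm.eval {α : Type} [DecidableEq α] : TForm α → List α → ℕ → Bool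
  | .sym a, w, i => w[i - 1]? == some a
  | .not φ, w, i => !(φ.eval w i)
  | .and φ ψ, w, i => φ.eval w i && ψ.eval w i
  | .prev φ, w, i => ((List.range i).filter (fun j => 0 < j)).any (fun j => φ.eval w j)
  | .hist φ, w, i => ((List.range (i + 1)).filter (fun j => 0 < j)).all (fun j => φ.eval w j)

def TForm.lang {α : Type} [DecidableEq α] (φ : TForm α) : Set (List α) :=
  {w | φ.eval w w.length = true}

def TForm.size {α : Type} : TForm α → ℕ
  | .sym _ => 1
  | .not φ => φ.size + 1
  | .and φ ψ => φ.size + ψ.size + 1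
  | .prev φ => φ.size + 1
  | .hist φ => φ.size + 1

/-!
Call a position `k` of `w` a repetition for `φ` if every subformula of `φ` takes at `k` a truth
value that it already took at some earlier position. Deleting such a position changes the value
of no subformula at any other position, since `◆` and `⊟` only ask which values occurred before.
At every position that is not a repetition, some subformula takes a value for the first time;
there are at most `2 |φ|` such events, so a model longer than `2 |φ| + 1` has a repetition before
its last position, and deleting repetitions one at a time yields a model of linear length.
-/

/-- The `ℕ`-analogue of `Fin.succAbove`: it enumerates `{i | i ≠ k}` in increasing order. -/
def Nat.succAbove (k i : ℕ) : ℕ := if i < k then i else i + 1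

namespace Nat

theorem strictMono_succAbove (k : ℕ) : StrictMono (succAbove k) := by
  intro i j h
  unfold succAbove
  split_ifs <;> omega

theorem exists_succAbove_eq {k j : ℕ} (h : j ≠ k) : ∃ i, succAbove k i = j :=
  ⟨if j < k then j else j - 1, by unfold succAbove; split_ifs <;> omega⟩

theorem exists_succAbove_iff {P : ℕ → Prop} {k m : ℕ}
    (hk : ∃ j, 0 < j ∧ j < k ∧ (P j ↔ P k)) :
    (∃ i, 0 < i ∧ succAbove k i < m ∧ P (succAbove k i)) ↔ ∃ j, 0 < j ∧ j < m ∧ P j := by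
  constructor
  · rintro ⟨i, hi, him, hP⟩
    exact ⟨succAbove k i, by unfold succAbove; split_ifs <;> omega, him, hP⟩
  · rintro ⟨j, hj, hjm, hP⟩
    by_cases hjk : j = k
    · obtain ⟨j₀, hj₀, hj₀k, hP₀⟩ := hk
      refine ⟨j₀, hj₀, ?_⟩
      rw [succAbove, if_pos hj₀k]
      exact ⟨by omega, hP₀.2 (hjk ▸ hP)⟩
    · obtain ⟨i, rfl⟩ := exists_succAbove_eq hjk
      exact ⟨i, by unfold succAbove at hj; split_ifs at hj <;> omega, hjm, hP⟩

end Nat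

namespace TForm

variable {α : Type}

def subformulas : TForm α → List (TForm α)
  | .sym a => [.sym a]
  | .not φ => .not φ :: φ.subformulas
  | .and φ ψ => .and φ ψ :: (φ.subformulas ++ ψ.subformulas)
  | .prev φ => .prev φ :: φ.subformulas
  | .hist φ => .hist φ :: φ.subformulas

theorem length_subformulas (φ : TForm α) : φ.subformulas.length = φ.size := by
  induction φ <;> simp [subformulas, size, *]

theorem mem_subformulas_self (φ : TForm α) : φ ∈ φ.subformulas := by
  cases φ <;> simp [subformulas]

variable [DecidableEq α]

theorem eval_prev_eq_true_iff (φ : TForm α) (w : List α) (i : ℕ) :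
    (prev φ).eval w i = true ↔ ∃ j, 0 < j ∧ j < i ∧ φ.eval w j = true := by
  simp only [eval, List.any_eq_true, List.mem_filter, List.mem_range, decide_eq_true_eq]
  tauto

theorem eval_hist_eq_false_iff (φ : TForm α) (w : List α) (i : ℕ) :
    (hist φ).eval w i = false ↔ ∃ j, 0 < j ∧ j < i + 1 ∧ φ.eval w j = false := by
  simp only [eval, List.all_eq_false, List.mem_filter, List.mem_range, decide_eq_true_eq,
    Bool.not_eq_true]
  tauto

def valuesBefore (φ : TForm α) (w : List α) (k : ℕ) : Finset Bool :=
  (Finset.Ico 1 k).image (φ.eval w)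

def ValuesRepeatAt (φ : TForm α) (w : List α) (k : ℕ) : Prop :=
  ∀ ψ ∈ φ.subformulas, ψ.eval w k ∈ ψ.valuesBefore w k

theorem exists_eval_eq_of_mem_valuesBefore {φ : TForm α} {w : List α} {k : ℕ}
    (h : φ.eval w k ∈ φ.valuesBefore w k) (b : Bool) :
    ∃ j, 0 < j ∧ j < k ∧ (φ.eval w j = b ↔ φ.eval w k = b) := by
  obtain ⟨j, hj, hjk⟩ := Finset.mem_image.1 h
  rw [Finset.mem_Ico] at hj
  exact ⟨j, hj.1, hj.2, by rw [hjk]⟩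

/-- Positions are `1`-based (position `i` of `w` is `w[i - 1]`), so `w.eraseIdx (k - 1)`
deletes position `k`. -/
theorem eval_eraseIdx {φ : TForm α} {w : List α} {k : ℕ} (hk : φ.ValuesRepeatAt w k)
    {i : ℕ} (hi : 0 < i) : φ.eval (w.eraseIdx (k - 1)) i = φ.eval w (Nat.succAbove k i) := by
  induction φ generalizing i with
  | sym a =>
    simp only [eval, List.getElem?_eraseIdx, Nat.succAbove]
    split_ifs <;>
      first | rfl | (exfalso; omega) | simp only [Nat.sub_add_cancel hi, Nat.add_sub_cancel]
  | not φ ih =>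
    simp only [eval, ih (fun ψ hψ => hk ψ (List.mem_cons_of_mem _ hψ)) hi]
  | and φ ψ ihφ ihψ =>
    simp only [eval,
      ihφ (fun χ hχ => hk χ (List.mem_cons_of_mem _ (List.mem_append_left _ hχ))) hi,
      ihψ (fun χ hχ => hk χ (List.mem_cons_of_mem _ (List.mem_append_right _ hχ))) hi]
  | prev φ ih =>
    have hφ := hk φ (List.mem_cons_of_mem _ φ.mem_subformulas_self)
    rw [Bool.eq_iff_iff, eval_prev_eq_true_iff, eval_prev_eq_true_iff,
      ← Nat.exists_succAbove_iff (exists_eval_eq_of_mem_valuesBefore hφ true)]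
    refine exists_congr fun j => and_congr_right fun hj => and_congr ?_ ?_
    · exact (Nat.strictMono_succAbove k).lt_iff_lt.symm
    · rw [ih (fun ψ hψ => hk ψ (List.mem_cons_of_mem _ hψ)) hj]
  | hist φ ih =>
    have hφ := hk φ (List.mem_cons_of_mem _ φ.mem_subformulas_self)
    rw [← Bool.not_inj_iff, Bool.eq_iff_iff, Bool.not_eq_true', Bool.not_eq_true',
      eval_hist_eq_false_iff, eval_hist_eq_false_iff,
      ← Nat.exists_succAbove_iff (exists_eval_eq_of_mem_valuesBefore hφ false)]
    refine exists_congr fun j => and_congr_right fun hj => and_congr ?_ ?_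
    · simp only [Nat.lt_succ_iff, (Nat.strictMono_succAbove k).le_iff_le]
    · rw [ih (fun ψ hψ => hk ψ (List.mem_cons_of_mem _ hψ)) hj]

def valueCount (φ : TForm α) (w : List α) (k : ℕ) : ℕ :=
  (φ.subformulas.map fun ψ => (ψ.valuesBefore w k).card).sum

theorem valueCount_le (φ : TForm α) (w : List α) (k : ℕ) : φ.valueCount w k ≤ 2 * φ.size := by
  have h := List.sum_le_card_nsmul (φ.subformulas.map fun ψ => (ψ.valuesBefore w k).card) 2
    (by simpa using fun ψ _ => (ψ.valuesBefore w k).card_le_univ)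
  simpa [valueCount, length_subformulas, mul_comm] using h

theorem valuesBefore_succ (φ : TForm α) (w : List α) {k : ℕ} (hk : 0 < k) :
    φ.valuesBefore w (k + 1) = insert (φ.eval w k) (φ.valuesBefore w k) := by
  rw [valuesBefore, ← Nat.succ_eq_add_one, Nat.Ico_succ_right_eq_insert_Ico hk,
    Finset.image_insert, valuesBefore]

theorem valueCount_lt_succ {φ : TForm α} {w : List α} {k : ℕ} (hk : 0 < k)
    (h : ¬ φ.ValuesRepeatAt w k) : φ.valueCount w k < φ.valueCount w (k + 1) := by
  obtain ⟨ψ, hψ, hnew⟩ := not_forall₂.1 h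
  refine List.sum_lt_sum _ _ (fun χ _ => Finset.card_le_card ?_) ⟨ψ, hψ, ?_⟩
  · rw [valuesBefore_succ χ w hk]
    exact Finset.subset_insert _ _
  · rw [valuesBefore_succ ψ w hk, Finset.card_insert_of_notMem hnew]
    exact Nat.lt_succ_self _

theorem exists_valuesRepeatAt (φ : TForm α) (w : List α) {n : ℕ} (hn : 2 * φ.size + 1 < n) :
    ∃ k, 0 < k ∧ k < n ∧ φ.ValuesRepeatAt w k := by
  by_contra! hnone
  have hgrow : ∀ m ≤ n, m - 1 ≤ φ.valueCount w m := by
    intro m hm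
    induction m with
    | zero => exact Nat.zero_le _
    | succ m ih =>
      rcases Nat.eq_zero_or_pos m with rfl | hm0
      · exact Nat.zero_le _
      · have := valueCount_lt_succ hm0 (hnone m hm0 (by omega))
        have := ih (by omega)
        omega
  have := hgrow n le_rfl
  have := φ.valueCount_le w n
  omega

theorem exists_model_length_le (φ : TForm α) {w : List α} (hne : w ≠ [])
    (hw : φ.eval w w.length = true) :
    ∃ w' : List α, w' ≠ [] ∧ φ.eval w' w'.length = true ∧ w'.length ≤ 2 * φ.size + 1 := by
  induction hn : w.length using Nat.strong_induction_on generalizing w with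
  | _ n ih =>
    subst hn
    by_cases hshort : w.length ≤ 2 * φ.size + 1
    · exact ⟨w, hne, hw, hshort⟩
    obtain ⟨k, hk, hkn, hrep⟩ := φ.exists_valuesRepeatAt w (not_le.1 hshort)
    have hlen : (w.eraseIdx (k - 1)).length = w.length - 1 :=
      List.length_eraseIdx_of_lt (by omega)
    refine ih _ (by omega) (List.ne_nil_of_length_pos (by omega)) ?_ hlen
    rw [hlen, eval_eraseIdx hrep (by omega), Nat.succAbove, if_neg (by omega),
      Nat.sub_add_cancel (by omega), hw]

end TForm

/-- Small-model property for TL[◆]: every satisfiable formula (satisfied at the last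
position of some nonempty string) has a satisfying string of length at most polynomial
in the size of the formula. -/
theorem tl_small_model :
    ∃ c : ℕ, ∀ (α : Type) [DecidableEq α] (φ : TForm α),
      (∃ w : List α, w ≠ [] ∧ φ.eval w w.length = true) →
      ∃ w : List α, w ≠ [] ∧ φ.eval w w.length = true ∧
        w.length ≤ c * (φ.size + 1) ^ c := by
  refine ⟨2, fun α _ φ ⟨w, hne, hw⟩ => ?_⟩
  obtain ⟨w', hne', hw', hlen⟩ := φ.exists_model_length_le hne hw
  exact ⟨w', hne', hw', hlen.trans (by nlinarith)⟩
end

section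
/- Let Ψ be a finite set of 'band' predicates ψ, each of the form α_ψ · #a > β_ψ · (position index) with α_ψ, β_ψ positive integers and α_ψ/β_ψ ∈ (0,1) ∪ (1,∞) together with axis cases. Then there exists a constant ε (depending on k and Ψ) such that for every string w ∈ D_k and every ψ ∈ Ψ, either |{j ≤ i : w,j ⊨ ψ}| = i ± ε for all positions i with i > ε, or |{j ≤ i : w,j ⊨ ψ}| ≤ ε for all positions i. In other words, along strings of the bounded Dyck language D_k, each linear-threshold predicate comparing #a against a fraction of the position is eventually constantly true or constantly false, up to a bounded-size exceptional prefix. -/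
/-!
Every word of `dyck k` keeps its prefix counts in the band `j ≤ 2·#a(j) ≤ j + k`.
If `α > 2β`, the lower edge already gives `β·j < α·#a(j)` at every position, so the
predicate holds everywhere. If `α < 2β`, the upper edge gives
`2β·j < 2α·#a(j) ≤ α·(j + k)`, i.e. `(2β - α)·j < α·k`,
so the predicate can only hold at the first `α·k` positions.
-/

open Computability

def dyck : ℕ → Language Bool
  | 0 => 1
  | k + 1 => ({[true]} * dyck k * {[false]})∗

def bandCount (w : List Bool) (a b i : ℕ) : ℕ :=
  ((Finset.Icc 1 i).filter (fun j => b * j < a * ((w.take j).count true))).card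

/-- Words with as many `a`s as `b`s whose prefix excess `#a - #b` stays in `[0, m]`. -/
def InBand (m : ℕ) (w : List Bool) : Prop :=
  2 * w.count true = w.length ∧
    ∀ j ≤ w.length, j ≤ 2 * (w.take j).count true ∧ 2 * (w.take j).count true ≤ j + m

namespace InBand

variable {m : ℕ} {u v : List Bool}

theorem nil (m : ℕ) : InBand m [] :=
  ⟨rfl, fun j hj => by simp_all⟩

theorem append (hu : InBand m u) (hv : InBand m v) : InBand m (u ++ v) := by
  obtain ⟨hu_count, hu_prefix⟩ := hu
  obtain ⟨hv_count, hv_prefix⟩ := hv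
  refine ⟨by simp only [List.count_append, List.length_append]; omega, fun j hj => ?_⟩
  rw [List.take_append, List.count_append]
  rcases le_or_gt j u.length with h | h
  · simpa [Nat.sub_eq_zero_of_le h] using hu_prefix j h
  · rw [List.take_of_length_le h.le]
    have := hv_prefix (j - u.length) (by simp only [List.length_append] at hj; omega)
    omega

theorem wrap (hu : InBand m u) : InBand (m + 1) (true :: (u ++ [false])) := by
  obtain ⟨hu_count, hu_prefix⟩ := hu
  have take_count : ∀ s, ((u ++ [false]).take s).count true = (u.take s).count true := by
    intro s
    rw [List.take_append, List.count_append, add_eq_left]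
    exact List.count_eq_zero.mpr fun h => by simpa using List.mem_of_mem_take h
  refine ⟨by simp; omega, fun j hj => ?_⟩
  rcases j with _ | s
  · simp
  simp only [List.take_succ_cons, List.count_cons_self, take_count]
  simp only [List.length_cons, List.length_append, List.length_nil] at hj
  rcases le_or_gt s u.length with hs | hs
  · have := hu_prefix s hs
    omega
  · rw [List.take_of_length_le hs.le]
    omega

end InBand

theorem inBand_of_mem_dyck : ∀ {k : ℕ} {w : List Bool}, w ∈ dyck k → InBand k w
  | 0, w, hw => by
    rw [dyck, Language.mem_one] at hw
    exact hw ▸ InBand.nil 0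
  | k + 1, w, hw => by
    rw [dyck, Language.mem_kstar] at hw
    obtain ⟨L, rfl, hL⟩ := hw
    induction L with
    | nil => exact InBand.nil _
    | cons y L ih =>
      obtain ⟨_, ⟨_, rfl, u, hu, rfl⟩, _, rfl, rfl⟩ := hL y List.mem_cons_self
      exact (inBand_of_mem_dyck hu).wrap.append
        (ih fun z hz => hL z (List.mem_cons_of_mem _ hz))

section bandCount

variable {w : List Bool} {a b i : ℕ}

theorem bandCount_eq_self
    (h : ∀ j ∈ Finset.Icc 1 i, b * j < a * (w.take j).count true) :
    bandCount w a b i = i := by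
  rw [bandCount, Finset.filter_true_of_mem h, Nat.card_Icc, Nat.add_sub_cancel]

theorem bandCount_le {N : ℕ}
    (h : ∀ j ∈ Finset.Icc 1 i, b * j < a * (w.take j).count true → j ≤ N) :
    bandCount w a b i ≤ N :=
  calc bandCount w a b i ≤ (Finset.Icc 1 N).card := Finset.card_le_card fun j hj => by
          rw [Finset.mem_filter] at hj
          exact Finset.mem_Icc.mpr ⟨(Finset.mem_Icc.mp hj.1).1, h j hj.1 hj.2⟩
    _ = N := by rw [Nat.card_Icc, Nat.add_sub_cancel]

variable {k : ℕ}

theorem InBand.bandCount_eq_self_of_gt (hw : InBand k w) (hab : 2 * b < a)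
    (hi : i ≤ w.length) : bandCount w a b i = i :=
  bandCount_eq_self fun j hj => by
    rw [Finset.mem_Icc] at hj
    have := (hw.2 j (hj.2.trans hi)).1
    nlinarith

theorem InBand.bandCount_le_of_lt (hw : InBand k w) (hab : a < 2 * b)
    (hi : i ≤ w.length) : bandCount w a b i ≤ a * k :=
  bandCount_le fun j hj hpred => by
    rw [Finset.mem_Icc] at hj
    have := (hw.2 j (hj.2.trans hi)).2
    nlinarith

end bandCount

/-- Band lemma: for any finite set Ψ of band predicates `α·#a > β·i` with positive
coefficients, ratio ≠ 1, and associated line distinct from the diagonal (α ≠ 2β),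
there is a constant ε such that along every string of `dyck k` each predicate's count
is `i ± ε` for all positions `i > ε`, or stays `≤ ε` at all positions. -/
theorem band_lemma (k : ℕ) (Ψ : Finset (ℕ × ℕ))
    (hΨ : ∀ p ∈ Ψ, 0 < p.1 ∧ 0 < p.2 ∧ p.1 ≠ p.2 ∧ p.1 ≠ 2 * p.2) :
    ∃ ε : ℕ, ∀ w ∈ dyck k, ∀ p ∈ Ψ,
      (∀ i, ε < i → i ≤ w.length → i ≤ bandCount w p.1 p.2 i + ε) ∨
      (∀ i ≤ w.length, bandCount w p.1 p.2 i ≤ ε) := by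
  refine ⟨Ψ.sup Prod.fst * k, fun w hw p hp => ?_⟩
  have hband := inBand_of_mem_dyck hw
  rcases lt_or_gt_of_ne (hΨ p hp).2.2.2 with hlt | hgt
  · refine Or.inr fun i hi => (hband.bandCount_le_of_lt hlt hi).trans ?_
    exact Nat.mul_le_mul_right k (Finset.le_sup (f := Prod.fst) hp)
  · exact Or.inl fun i _ hi => (hband.bandCount_eq_self_of_gt hgt hi).symm ▸ Nat.le_add_right _ _
end
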